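/- Let d ≥ 2 and let k¹, …, k^d ∈ ℤ^d \ {0} be linearly independent over ℝ. For a unit vector v ∈ ℝ^d, let Π_v = Id − v vᵀ denote the orthogonal projection of ℝ^d onto the orthogonal complement v^⊥ of v. Then for every x ∈ ℝ^d and every unit vector v ∈ ℝ^d, the collection of vectors in ℝ^d × ℝ^d consisting of (sin(k^j·x) γ, (k^j·v) cos(k^j·x) Π_v γ) and (cos(k^j·x) γ, −(k^j·v) sin(k^j·x) Π_v γ), as j ranges over 1,…,d and γ ranges over the orthogonal complement (k^j)^⊥ = {γ ∈ ℝ^d : γ·k^j = 0}, spans the subspace ℝ^d × v^⊥ of ℝ^d × ℝ^d. -/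

import Mathlib

open MeasureTheory Topology
open scoped NNReal ENNReal

noncomputable section

attribute [local instance] Matrix.normedAddCommGroup

/-- Euclidean space `ℝ^d`. -/
abbrev Ed (d : ℕ) := EuclideanSpace ℝ (Fin d)

/-- The real vector in `ℝ^d` with the given integer coordinates. -/
noncomputable def zVec {d : ℕ} (m : Fin d → ℤ) : Ed d := WithLp.toLp 2 (fun i => (m i : ℝ))

/-- The generating set in Statement 15. -/
def S15 {d : ℕ} (k : Fin d → (Fin d → ℤ)) (x v : Ed d) : Set (Ed d × Ed d) :=
  {q : Ed d × Ed d | ∃ (j : Fin d) (γ : Ed d), (inner ℝ (zVec (k j)) γ : ℝ) = 0 ∧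
        (q = (Real.sin (inner ℝ (zVec (k j)) x : ℝ) • γ,
              ((inner ℝ (zVec (k j)) v : ℝ) * Real.cos (inner ℝ (zVec (k j)) x : ℝ)) •
                (γ - (inner ℝ v γ : ℝ) • v)) ∨
         q = (Real.cos (inner ℝ (zVec (k j)) x : ℝ) • γ,
              (-((inner ℝ (zVec (k j)) v : ℝ) * Real.sin (inner ℝ (zVec (k j)) x : ℝ))) •
                (γ - (inner ℝ v γ : ℝ) • v)))}

lemma pair_not_smul {ι E : Type*} [AddCommGroup E] [Module ℝ E] [DecidableEq ι]
    {f : ι → E} (hf : LinearIndependent ℝ f) {j j' : ι} (h : j ≠ j') (c : ℝ) :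
    f j ≠ c • f j' := by
  intro hc
  have hsum : ∑ i ∈ ({j, j'} : Finset ι), (fun i => if i = j then (1:ℝ) else -c) i • f i = 0 := by
    rw [Finset.sum_pair h]
    simp [Ne.symm h, hc]
  have := linearIndependent_iff'.mp hf {j, j'} _ hsum j (by simp)
  simp at this

/-- `(γ, 0)` is in the span, for `γ ⟂ k j`. -/
lemma key1 {d : ℕ} (k : Fin d → (Fin d → ℤ)) (x v : Ed d)
    (j : Fin d) (γ : Ed d) (hγ : (inner ℝ (zVec (k j)) γ : ℝ) = 0) :
    ((γ, (0 : Ed d)) : Ed d × Ed d) ∈ Submodule.span ℝ (S15 k x v) := by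
  set θ := (inner ℝ (zVec (k j)) x : ℝ) with hθ
  set c := (inner ℝ (zVec (k j)) v : ℝ) with hc
  set w := γ - (inner ℝ v γ : ℝ) • v with hw
  have m1 : (Real.sin θ • γ, (c * Real.cos θ) • w) ∈ S15 k x v := ⟨j, γ, hγ, Or.inl rfl⟩
  have m2 : (Real.cos θ • γ, (-(c * Real.sin θ)) • w) ∈ S15 k x v := ⟨j, γ, hγ, Or.inr rfl⟩
  have hmem := Submodule.add_mem _
    (Submodule.smul_mem _ (Real.sin θ) (Submodule.subset_span m1))
    (Submodule.smul_mem _ (Real.cos θ) (Submodule.subset_span m2))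
  convert hmem using 1
  have h1 : Real.sin θ * Real.sin θ + Real.cos θ * Real.cos θ = 1 := by
    have := Real.sin_sq_add_cos_sq θ; nlinarith
  refine Prod.ext ?_ ?_
  · show γ = Real.sin θ • (Real.sin θ • γ) + Real.cos θ • (Real.cos θ • γ)
    rw [smul_smul, smul_smul, ← add_smul, h1, one_smul]
  · show (0 : Ed d) = Real.sin θ • ((c * Real.cos θ) • w)
      + Real.cos θ • ((-(c * Real.sin θ)) • w)
    rw [smul_smul, smul_smul, ← add_smul,
      show Real.sin θ * (c * Real.cos θ) + Real.cos θ * (-(c * Real.sin θ)) = 0 from by ring,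
      zero_smul]

/-- `(0, ⟪k j, v⟫ • Π_v γ)` is in the span, for `γ ⟂ k j`. -/
lemma key2 {d : ℕ} (k : Fin d → (Fin d → ℤ)) (x v : Ed d)
    (j : Fin d) (γ : Ed d) (hγ : (inner ℝ (zVec (k j)) γ : ℝ) = 0) :
    (((0 : Ed d), (inner ℝ (zVec (k j)) v : ℝ) • (γ - (inner ℝ v γ : ℝ) • v)) : Ed d × Ed d)
      ∈ Submodule.span ℝ (S15 k x v) := by
  set θ := (inner ℝ (zVec (k j)) x : ℝ) with hθ
  set c := (inner ℝ (zVec (k j)) v : ℝ) with hc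
  set w := γ - (inner ℝ v γ : ℝ) • v with hw
  have m1 : (Real.sin θ • γ, (c * Real.cos θ) • w) ∈ S15 k x v := ⟨j, γ, hγ, Or.inl rfl⟩
  have m2 : (Real.cos θ • γ, (-(c * Real.sin θ)) • w) ∈ S15 k x v := ⟨j, γ, hγ, Or.inr rfl⟩
  have hmem := Submodule.sub_mem _
    (Submodule.smul_mem _ (Real.cos θ) (Submodule.subset_span m1))
    (Submodule.smul_mem _ (Real.sin θ) (Submodule.subset_span m2))
  convert hmem using 1
  have h1 : Real.sin θ * Real.sin θ + Real.cos θ * Real.cos θ = 1 := by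
    have := Real.sin_sq_add_cos_sq θ; nlinarith
  refine Prod.ext ?_ ?_
  · show (0 : Ed d) = Real.cos θ • (Real.sin θ • γ) - Real.sin θ • (Real.cos θ • γ)
    rw [smul_smul, smul_smul, ← sub_smul,
      show Real.cos θ * Real.sin θ - Real.sin θ * Real.cos θ = 0 from by ring, zero_smul]
  · show c • w = Real.cos θ • ((c * Real.cos θ) • w) - Real.sin θ • ((-(c * Real.sin θ)) • w)
    rw [smul_smul, smul_smul, ← sub_smul,
      show Real.cos θ * (c * Real.cos θ) - Real.sin θ * (-(c * Real.sin θ)) = c from by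
        linear_combination c * h1]

/-- spanning property of the Lie brackets for the projective process:
for linearly independent integer wavevectors `k¹, …, k^d`, any `x ∈ ℝ^d` and any unit
vector `v`, the listed vectors span `ℝ^d × v^⊥` inside `ℝ^d × ℝ^d`. -/
theorem statement15 {d : ℕ} (hd : 2 ≤ d) (k : Fin d → (Fin d → ℤ))
    (hk : LinearIndependent ℝ fun j => zVec (k j)) (x v : Ed d) (hv : ‖v‖ = 1) :
    Submodule.span ℝ
      {q : Ed d × Ed d | ∃ (j : Fin d) (γ : Ed d), (inner ℝ (zVec (k j)) γ : ℝ) = 0 ∧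
        (q = (Real.sin (inner ℝ (zVec (k j)) x : ℝ) • γ,
              ((inner ℝ (zVec (k j)) v : ℝ) * Real.cos (inner ℝ (zVec (k j)) x : ℝ)) •
                (γ - (inner ℝ v γ : ℝ) • v)) ∨
         q = (Real.cos (inner ℝ (zVec (k j)) x : ℝ) • γ,
              (-((inner ℝ (zVec (k j)) v : ℝ) * Real.sin (inner ℝ (zVec (k j)) x : ℝ))) •
                (γ - (inner ℝ v γ : ℝ) • v)))} =
      Submodule.prod ⊤ ((Submodule.span ℝ {v})ᗮ) := by
  have hvv : (inner ℝ v v : ℝ) = 1 := by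
    rw [real_inner_self_eq_norm_sq, hv]; norm_num
  show Submodule.span ℝ (S15 k x v) = _
  apply le_antisymm
  · -- span ⊆ ⊤ × v^⊥
    rw [Submodule.span_le]
    rintro q ⟨j, γ, hγ, (rfl | rfl)⟩ <;>
    · refine Submodule.mem_prod.mpr ⟨trivial, ?_⟩
      rw [Submodule.mem_orthogonal]
      intro u hu
      rw [Submodule.mem_span_singleton] at hu
      obtain ⟨a, rfl⟩ := hu
      rw [real_inner_smul_left, real_inner_smul_right, inner_sub_right,
        real_inner_smul_right, hvv]
      ring
  · -- ⊤ × v^⊥ ⊆ span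
    -- first components: all of ℝ^d
    have htop : ∀ w : Ed d, ((w, (0 : Ed d)) : Ed d × Ed d) ∈ Submodule.span ℝ (S15 k x v) := by
      intro w
      have hj : (0 : ℕ) < d := by omega
      have hj' : (1 : ℕ) < d := by omega
      set j : Fin d := ⟨0, hj⟩
      set j' : Fin d := ⟨1, hj'⟩
      have hjj' : j ≠ j' := by simp [j, j', Fin.ext_iff]
      set a := zVec (k j) with ha
      set b := zVec (k j') with hb
      have hbb : (inner ℝ b b : ℝ) ≠ 0 := by
        rw [ne_eq, inner_self_eq_zero]
        exact hk.ne_zero j'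
      set ab : Ed d := a - ((inner ℝ b a : ℝ) / (inner ℝ b b : ℝ)) • b with hab
      have habb : (inner ℝ b ab : ℝ) = 0 := by
        rw [hab, inner_sub_right, real_inner_smul_right, div_mul_cancel₀ _ hbb, sub_self]
      have hab0 : ab ≠ 0 := by
        intro h0
        have : a = ((inner ℝ b a : ℝ) / (inner ℝ b b : ℝ)) • b := by
          have := sub_eq_zero.mp h0; exact this
        exact pair_not_smul hk hjj' _ this
      have haab : (inner ℝ a ab : ℝ) ≠ 0 := by
        have : (inner ℝ a ab : ℝ) = (inner ℝ ab ab : ℝ) := by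
          conv_lhs => rw [show a = ab + ((inner ℝ b a : ℝ) / (inner ℝ b b : ℝ)) • b from by
            rw [hab]; abel]
          rw [inner_add_left, real_inner_smul_left, habb]
          ring
        rw [this, ne_eq, inner_self_eq_zero]
        exact hab0
      set γ' : Ed d := ((inner ℝ a w : ℝ) / (inner ℝ a ab : ℝ)) • ab with hγ'
      have hγ'b : (inner ℝ b γ' : ℝ) = 0 := by
        rw [hγ', real_inner_smul_right, habb, mul_zero]
      have hγa : (inner ℝ a (w - γ') : ℝ) = 0 := by
        rw [inner_sub_right, hγ', real_inner_smul_right, div_mul_cancel₀ _ haab, sub_self]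
      have h1 := key1 k x v j (w - γ') hγa
      have h2 := key1 k x v j' γ' hγ'b
      have := Submodule.add_mem _ h1 h2
      convert this using 1
      refine Prod.ext ?_ ?_
      · show w = (w - γ') + γ'; abel
      · show (0 : Ed d) = 0 + 0; simp
    -- second components: all of v^⊥
    have hsec : ∀ u : Ed d, u ∈ (Submodule.span ℝ {v})ᗮ →
        (((0 : Ed d), u) : Ed d × Ed d) ∈ Submodule.span ℝ (S15 k x v) := by
      intro u hu
      have hvu : (inner ℝ v u : ℝ) = 0 :=
        (Submodule.mem_orthogonal _ _).mp hu v (Submodule.mem_span_singleton_self v)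
      -- find j₀ with ⟪k j₀, v⟫ ≠ 0
      haveI : Nonempty (Fin d) := ⟨⟨0, by omega⟩⟩
      have hspan : Submodule.span ℝ (Set.range fun j => zVec (k j)) = ⊤ :=
        hk.span_eq_top_of_card_eq_finrank (by simp)
      have hex : ∃ j₀ : Fin d, (inner ℝ (zVec (k j₀)) v : ℝ) ≠ 0 := by
        by_contra hcon
        push_neg at hcon
        have hall : ∀ u ∈ Submodule.span ℝ (Set.range fun j => zVec (k j)),
            (inner ℝ u v : ℝ) = 0 := by
          intro u hu
          induction hu using Submodule.span_induction with
          | mem p hp => obtain ⟨j, rfl⟩ := hp; simpa using hcon j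
          | zero => simp
          | add p q _ _ hp hq => rw [inner_add_left, hp, hq, add_zero]
          | smul r p _ hp => rw [real_inner_smul_left, hp, mul_zero]
        have hv0 := hall v (by rw [hspan]; trivial)
        rw [hvv] at hv0; norm_num at hv0
      obtain ⟨j₀, hj₀⟩ := hex
      set c := (inner ℝ (zVec (k j₀)) v : ℝ) with hc
      set t := (inner ℝ (zVec (k j₀)) u : ℝ) / c with ht
      set γ : Ed d := u - t • v with hγ
      have hγk : (inner ℝ (zVec (k j₀)) γ : ℝ) = 0 := by
        rw [hγ, inner_sub_right, real_inner_smul_right, ← hc, ht, div_mul_cancel₀ _ hj₀,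
          sub_self]
      have hPi : γ - (inner ℝ v γ : ℝ) • v = u := by
        have : (inner ℝ v γ : ℝ) = -t := by
          rw [hγ, inner_sub_right, real_inner_smul_right, hvu, hvv]; ring
        rw [this, hγ]
        simp only [neg_smul, sub_neg_eq_add]
        abel
      have h2 := key2 k x v j₀ γ hγk
      rw [hPi] at h2
      have := Submodule.smul_mem _ c⁻¹ h2
      convert this using 1
      refine Prod.ext ?_ ?_
      · show (0 : Ed d) = c⁻¹ • 0; simp
      · show u = c⁻¹ • (c • u)
        rw [smul_smul, inv_mul_cancel₀ hj₀, one_smul]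
    intro q hq
    rw [Submodule.mem_prod] at hq
    have hq2 := hq.2
    have : q = ((q.1, (0 : Ed d)) : Ed d × Ed d) + ((0 : Ed d), q.2) := by
      refine Prod.ext ?_ ?_ <;> simp
    rw [this]
    exact Submodule.add_mem _ (htop q.1) (hsec q.2 hq2)

end
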